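/- Let p > 3 be a prime and let G = Φ₂₇(1⁶) be the group of order p⁶ with presentation on generators α, α₁, α₂, α₃, α₄, β and relations [αᵢ,α] = αᵢ₊₁ for i = 1,2,3, [α₁,β] = α₄, [α₁,α₂] = α₄, αᵖ = βᵖ = 1, and αⱼ^(p) = 1 for j = 1,2,3,4, where αⱼ^(p) denotes αⱼᵖ·αⱼ₊₁^C(p,2)·αⱼ₊₂^C(p,3)·⋯·α₄^C(p,5−j); every commutator of a pair of generators not listed among these relations is declared trivial. Then the Bogomolov multiplier B₀(G) is trivial. -/

import Mathlib

/-!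
Φ₂₇(1⁶): relations [αᵢ,α]=αᵢ₊₁ (i=1,2,3), [α₁,β]=α₄, [α₁,α₂]=α₄, αᵖ=βᵖ=1, αⱼ^(p)=1.
-/

namespace Stmt6

/-- The additive group `ℚ/ℤ`. -/
abbrev QZ : Type := ℚ ⧸ AddSubgroup.zmultiples (1 : ℚ)

/-- An inhomogeneous 2-cocycle on `G` with values in `ℚ/ℤ` (trivial `G`-action). -/
def IsTwoCocycle {G : Type} [Group G] (f : G → G → QZ) : Prop :=
  ∀ g h j : G, f h j - f (g * h) j + f g (h * j) - f g h = 0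

/-- An inhomogeneous 2-coboundary on `G` with values in `ℚ/ℤ` (trivial `G`-action). -/
def IsTwoCoboundary {G : Type} [Group G] (f : G → G → QZ) : Prop :=
  ∃ c : G → QZ, ∀ g h : G, f g h = c h - c (g * h) + c g

/-- A subgroup is bicyclic if it is abelian and generated by at most two elements
(equivalently, cyclic or a direct product of two cyclic groups). -/
def IsBicyclic {G : Type} [Group G] (A : Subgroup G) : Prop :=
  (∀ x y : A, x * y = y * x) ∧ ∃ a b : G, A = Subgroup.closure {a, b}

/-- The Bogomolov multiplier `B₀(G) ⊆ H²(G, ℚ/ℤ)` is trivial, phrased at the level of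
2-cocycles: every 2-cocycle whose restriction to each bicyclic subgroup is a coboundary
(i.e. whose class restricts to zero on each bicyclic subgroup) is itself a coboundary
(i.e. its class is zero). -/
def BogomolovMultiplierIsTrivial (G : Type) [Group G] : Prop :=
  ∀ f : G → G → QZ, IsTwoCocycle f →
    (∀ A : Subgroup G, IsBicyclic A → IsTwoCoboundary (fun a b : ↥A => f ↑a ↑b)) →
    IsTwoCoboundary f

/-- The Bogomolov multiplier `B₀(G) ⊆ H²(G, ℚ/ℤ)` is nontrivial, phrased at the level of
2-cocycles. -/
def BogomolovMultiplierIsNontrivial (G : Type) [Group G] : Prop :=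
  ∃ f : G → G → QZ, IsTwoCocycle f ∧
    (∀ A : Subgroup G, IsBicyclic A → IsTwoCoboundary (fun a b : ↥A => f ↑a ↑b)) ∧
    ¬ IsTwoCoboundary f

/-- The generators. -/
inductive Gen | a | a1 | a2 | a3 | a4 | b

open FreeGroup

/-- The commutator `[x,y] = x⁻¹y⁻¹xy`. -/
def c (x y : FreeGroup Gen) : FreeGroup Gen := x⁻¹ * y⁻¹ * x * y

/-- The defining relators. -/
def rels (p : ℕ) : Set (FreeGroup Gen) :=
  { c (of .a1) (of .a) * (of Gen.a2)⁻¹,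
    c (of .a2) (of .a) * (of Gen.a3)⁻¹,
    c (of .a3) (of .a) * (of Gen.a4)⁻¹,
    c (of .a1) (of .b) * (of Gen.a4)⁻¹,
    c (of .a1) (of .a2) * (of Gen.a4)⁻¹,
    c (of .a) (of .a4),
    c (of .a) (of .b),
    c (of .a1) (of .a3),
    c (of .a1) (of .a4),
    c (of .a2) (of .a3),
    c (of .a2) (of .a4),
    c (of .a2) (of .b),
    c (of .a3) (of .a4),
    c (of .a3) (of .b),
    c (of .a4) (of .b),
    (of Gen.a) ^ p,
    (of Gen.b) ^ p,
    (of Gen.a1) ^ p * (of Gen.a2) ^ (p.choose 2) * (of Gen.a3) ^ (p.choose 3) * (of Gen.a4) ^ (p.choose 4),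
    (of Gen.a2) ^ p * (of Gen.a3) ^ (p.choose 2) * (of Gen.a4) ^ (p.choose 3),
    (of Gen.a3) ^ p * (of Gen.a4) ^ (p.choose 2),
    (of Gen.a4) ^ p }

/-!
A cocycle `f` defines a central extension `E = G ×_f ℚ/ℤ`, and `f` is a coboundary as soon as
`E → G` has a homomorphic section. If `f` vanishes on bicyclic subgroups, commuting elements of
`G` have commuting lifts in `E`; since `ℚ/ℤ` is divisible, lifts can moreover be corrected by
central `p`-th roots. So it suffices to lift the generators so that all relators hold.
Lift `α` and `β` to elements of order `p`, lift `α₁` arbitrarily and let the lifts of `α₂, α₃, α₄`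
be the iterated commutators with `α`. Conjugation by `α` acts on this chain with binomial
exponents, which yields the power relators of `α₂, α₃, α₄`; a central correction of `α₁` yields
its power relator. The two remaining relators come from commuting pairs in `G`: `α₁α⁻¹` commutes
with `βα₃⁻¹` and `α₁` with `α₂β⁻¹`, and for lifts this says `[α₁, β] = [α₃, α]` and
`[α₁, α₂] = [α₁, β]`.
-/

lemma QZ.exists_nsmul_eq (y : QZ) {n : ℕ} (hn : n ≠ 0) : ∃ t : QZ, n • t = y :=
  letI : DivisibleBy ℚ ℕ := AddGroup.divisibleByNatOfDivisibleByInt ℚ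
  DivisibleBy.surjective_smul QZ ℕ hn y

structure TwoCocycle (G : Type) [Group G] where
  toFun : G → G → QZ
  isTwoCocycle : IsTwoCocycle toFun

namespace TwoCocycle

variable {G : Type} [Group G] (F : TwoCocycle G)

lemma apply_add_apply_mul (g h k : G) :
    F.toFun g h + F.toFun (g * h) k = F.toFun h k + F.toFun g (h * k) := by
  rw [eq_comm, ← sub_eq_zero, ← F.isTwoCocycle g h k]
  abel

lemma apply_one_right (g : G) : F.toFun g 1 = F.toFun 1 1 := by
  simpa using F.apply_add_apply_mul g 1 1

lemma apply_one_left (g : G) : F.toFun 1 g = F.toFun 1 1 := by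
  simpa using (F.apply_add_apply_mul 1 1 g).symm

@[ext]
structure Extension (F : TwoCocycle G) where
  base : G
  val : QZ

instance : Group F.Extension where
  mul x y := ⟨x.base * y.base, x.val + y.val + F.toFun x.base y.base⟩
  one := ⟨1, -F.toFun 1 1⟩
  inv x := ⟨x.base⁻¹, -x.val - F.toFun x.base⁻¹ x.base - F.toFun 1 1⟩
  mul_assoc x y z := Extension.ext (mul_assoc ..) <| by
    change x.val + y.val + F.toFun x.base y.base + z.val + F.toFun (x.base * y.base) z.base
      = x.val + (y.val + z.val + F.toFun y.base z.base) + F.toFun x.base (y.base * z.base)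
    calc _ = x.val + y.val + z.val
          + (F.toFun x.base y.base + F.toFun (x.base * y.base) z.base) := by abel
      _ = _ := by rw [F.apply_add_apply_mul]; abel
  one_mul x := Extension.ext (one_mul _) <| by
    change -F.toFun 1 1 + x.val + F.toFun 1 x.base = x.val
    rw [F.apply_one_left x.base]; abel
  mul_one x := Extension.ext (mul_one _) <| by
    change x.val + -F.toFun 1 1 + F.toFun x.base 1 = x.val
    rw [F.apply_one_right x.base]; abel
  inv_mul_cancel x := Extension.ext (inv_mul_cancel _) <| by
    change -x.val - F.toFun x.base⁻¹ x.base - F.toFun 1 1 + x.val + F.toFun x.base⁻¹ x.base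
      = -F.toFun 1 1
    abel

lemma mul_def (x y : F.Extension) :
    x * y = ⟨x.base * y.base, x.val + y.val + F.toFun x.base y.base⟩ := rfl

def proj : F.Extension →* G where
  toFun := Extension.base
  map_one' := rfl
  map_mul' _ _ := rfl

lemma proj_surjective : Function.Surjective F.proj := fun g => ⟨⟨g, 0⟩, rfl⟩

def incl : Multiplicative QZ →* F.Extension where
  toFun t := ⟨1, t.toAdd - F.toFun 1 1⟩
  map_one' := Extension.ext rfl (zero_sub _)
  map_mul' s t := Extension.ext (one_mul 1).symm <| by
    change s.toAdd + t.toAdd - F.toFun 1 1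
      = s.toAdd - F.toFun 1 1 + (t.toAdd - F.toFun 1 1) + F.toFun 1 1
    abel

lemma exists_pow_eq {w : F.Extension} (hw : F.proj w = 1) {n : ℕ} (hn : n ≠ 0) :
    ∃ z, F.proj z = 1 ∧ z ^ n = w := by
  obtain ⟨t, ht⟩ := QZ.exists_nsmul_eq (w.val + F.toFun 1 1) hn
  refine ⟨F.incl (.ofAdd t), rfl, ?_⟩
  rw [← map_pow, ← ofAdd_nsmul, ht]
  exact Extension.ext hw.symm (add_sub_cancel_right _ _)

lemma isTwoCoboundary_of_section (s : G →* F.Extension) (hs : F.proj.comp s = .id G) :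
    IsTwoCoboundary F.toFun := by
  have hs' (g : G) : (s g).base = g := DFunLike.congr_fun hs g
  refine ⟨fun g => -(s g).val, fun g h => ?_⟩
  have := congrArg Extension.val (map_mul s g h)
  rw [mul_def, hs', hs'] at this
  change (s (g * h)).val = (s g).val + (s h).val + F.toFun g h at this
  change F.toFun g h = -(s h).val - -(s (g * h)).val + -(s g).val
  rw [this]
  abel

lemma commute_of_apply_comm {x y : F.Extension} (h : Commute x.base y.base)
    (hF : F.toFun x.base y.base = F.toFun y.base x.base) : Commute x y :=
  Extension.ext h <| by
    change x.val + y.val + F.toFun x.base y.base = y.val + x.val + F.toFun y.base x.base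
    rw [hF, add_comm x.val]

lemma commute_of_commute_proj
    (hF : ∀ A : Subgroup G, IsBicyclic A → IsTwoCoboundary fun a b : A => F.toFun a b)
    {x y : F.Extension} (h : Commute (F.proj x) (F.proj y)) : Commute x y := by
  set A := Subgroup.closure {x.base, y.base}
  have hA : IsMulCommutative A := Subgroup.isMulCommutative_closure <| by
    rintro g (rfl | rfl) g' (rfl | rfl)
    exacts [rfl, h, h.symm, rfl]
  obtain ⟨e, he⟩ := hF A ⟨hA.is_comm.comm, x.base, y.base, rfl⟩
  let u : A := ⟨x.base, Subgroup.subset_closure (by simp)⟩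
  let v : A := ⟨y.base, Subgroup.subset_closure (by simp)⟩
  refine F.commute_of_apply_comm h ?_
  change F.toFun u v = F.toFun v u
  have huv := he u v
  have hvu := he v u
  dsimp only at huv hvu
  rw [huv, hvu, hA.is_comm.comm u v]
  abel

end TwoCocycle

section CommutingLifts

variable {E G : Type*} [Group E] [Group G] {π : E →* G}

lemma commute_of_map_eq_one (hπ : ∀ x y, Commute (π x) (π y) → Commute x y) {z : E}
    (hz : π z = 1) (g : E) : Commute z g :=
  hπ z g (hz ▸ Commute.one_left _)

lemma commutator_eq_of_map_eq (hπ : ∀ x y, Commute (π x) (π y) → Commute x y) {x x' y : E}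
    (hx : π x' = π x) : x'⁻¹ * y⁻¹ * x' * y = x⁻¹ * y⁻¹ * x * y := by
  obtain ⟨z, hz, rfl⟩ : ∃ z, π z = 1 ∧ x' = x * z :=
    ⟨x⁻¹ * x', by simp [hx], by group⟩
  have hc := commute_of_map_eq_one hπ hz
  calc (x * z)⁻¹ * y⁻¹ * (x * z) * y = z⁻¹ * (x⁻¹ * y⁻¹ * x * (z * y)) := by group
    _ = z⁻¹ * ((x⁻¹ * y⁻¹ * x * y) * z) := by rw [(hc y).eq]; group
    _ = _ := by rw [← (hc _).eq]; group

lemma exists_map_eq_pow_mul_eq_one (hπ : ∀ x y, Commute (π x) (π y) → Commute x y) {n : ℕ}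
    (hroot : ∀ w, π w = 1 → ∃ z, π z = 1 ∧ z ^ n = w) {x w : E} (h : π (x ^ n * w) = 1) :
    ∃ x', π x' = π x ∧ x' ^ n * w = 1 := by
  obtain ⟨z, hz, hzn⟩ := hroot (x ^ n * w)⁻¹ (by rw [_root_.map_inv, h, inv_one])
  have hc := commute_of_map_eq_one hπ hz
  refine ⟨x * z, by simp [hz], ?_⟩
  rw [(hc x).symm.mul_pow, mul_assoc, ((hc w).pow_left n).eq, ← mul_assoc, hzn,
    mul_inv_cancel]

lemma exists_map_eq_pow_eq_one (hsurj : Function.Surjective π)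
    (hπ : ∀ x y, Commute (π x) (π y) → Commute x y) {n : ℕ}
    (hroot : ∀ w, π w = 1 → ∃ z, π z = 1 ∧ z ^ n = w) {g : G} (hg : g ^ n = 1) :
    ∃ x, π x = g ∧ x ^ n = 1 := by
  obtain ⟨x₀, rfl⟩ := hsurj g
  obtain ⟨x, hx, hxn⟩ := exists_map_eq_pow_mul_eq_one hπ hroot (w := 1)
    (by rwa [mul_one, _root_.map_pow])
  exact ⟨x, hx, by rwa [mul_one] at hxn⟩

end CommutingLifts

lemma PresentedGroup.exists_section_of_lift {α E : Type*} [Group E] {rels : Set (FreeGroup α)}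
    (π : E →* PresentedGroup rels) {f : α → E} (hf : ∀ x, π (f x) = .of x)
    (hrels : ∀ r ∈ rels, FreeGroup.lift f r = 1) :
    ∃ s : PresentedGroup rels →* E, π.comp s = .id _ :=
  ⟨PresentedGroup.toGroup hrels, PresentedGroup.ext fun x => by simp [hf]⟩

theorem bogomolovMultiplierIsTrivial_of_exists_section {G : Type} [Group G] {n : ℕ} (hn : n ≠ 0)
    (h : ∀ (E : Type) [Group E] (π : E →* G), Function.Surjective π →
      (∀ x y, Commute (π x) (π y) → Commute x y) →
      (∀ w, π w = 1 → ∃ z, π z = 1 ∧ z ^ n = w) → ∃ s : G →* E, π.comp s = .id G) :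
    BogomolovMultiplierIsTrivial G := by
  intro f hf hbi
  let F : TwoCocycle G := ⟨f, hf⟩
  obtain ⟨s, hs⟩ := h F.Extension F.proj F.proj_surjective
    (fun _ _ => F.commute_of_commute_proj hbi) (fun _ hw => F.exists_pow_eq hw hn)
  exact F.isTwoCoboundary_of_section s hs

section Chain

variable {H : Type*} [Group H] (φ : MulAut H)

lemma pow_apply_eq_mul_pow {v w : H} (hv : φ v = v * w) (hw : φ w = w) (n : ℕ) :
    (φ ^ n) v = v * w ^ n := by
  induction n with
  | zero => simp
  | succ n ih =>
    rw [pow_succ', MulAut.mul_apply, ih, _root_.map_mul, _root_.map_pow, hv, hw]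
    group

lemma pow_apply_eq_mul_pow_mul_pow_choose {u v w : H} (hu : φ u = u * v) (hv : φ v = v * w)
    (hw : φ w = w) (hvw : Commute v w) (n : ℕ) :
    (φ ^ n) u = u * v ^ n * w ^ n.choose 2 := by
  induction n with
  | zero => simp
  | succ n ih =>
    rw [pow_succ', MulAut.mul_apply, ih, _root_.map_mul, _root_.map_mul, _root_.map_pow,
      _root_.map_pow, hu, hv, hw, hvw.mul_pow, Nat.choose_succ_succ', Nat.choose_one_right]
    group

lemma pow_apply_eq_mul_pow_mul_pow_choose_mul_pow_choose {t u v w : H} (ht : φ t = t * u)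
    (hu : φ u = u * v) (hv : φ v = v * w) (hw : φ w = w) (huv : Commute u v)
    (hvw : Commute v w) (n : ℕ) :
    (φ ^ n) t = t * u ^ n * v ^ n.choose 2 * w ^ n.choose 3 := by
  induction n with
  | zero => simp
  | succ n ih =>
    rw [pow_succ', MulAut.mul_apply, ih, _root_.map_mul, _root_.map_mul, _root_.map_mul,
      _root_.map_pow, _root_.map_pow, _root_.map_pow, ht, hu, hv, hw, huv.mul_pow, hvw.mul_pow,
      Nat.choose_succ_succ', Nat.choose_one_right, Nat.choose_succ_succ' n 2]
    group

end Chain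

lemma pow_relations_of_commutator_chain {H : Type*} [Group H] {p : ℕ} {a a₁ a₂ a₃ a₄ : H}
    (ha : a ^ p = 1) (h₂ : a₁⁻¹ * a⁻¹ * a₁ * a = a₂) (h₃ : a₂⁻¹ * a⁻¹ * a₂ * a = a₃)
    (h₄ : a₃⁻¹ * a⁻¹ * a₃ * a = a₄) (h₂₃ : Commute a₂ a₃) (h₄a : Commute a₄ a)
    (h₃₄ : Commute a₃ a₄) :
    a₄ ^ p = 1 ∧ a₃ ^ p * a₄ ^ p.choose 2 = 1 ∧
      a₂ ^ p * a₃ ^ p.choose 2 * a₄ ^ p.choose 3 = 1 := by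
  set φ := (MulAut.conj a)⁻¹
  have hφ (x : H) : φ x = a⁻¹ * x * a := rfl
  have hφp : φ ^ p = 1 := by rw [inv_pow, ← _root_.map_pow, ha, _root_.map_one, inv_one]
  have e₁ : φ a₁ = a₁ * a₂ := by rw [hφ, ← h₂]; group
  have e₂ : φ a₂ = a₂ * a₃ := by rw [hφ, ← h₃]; group
  have e₃ : φ a₃ = a₃ * a₄ := by rw [hφ, ← h₄]; group
  have e₄ : φ a₄ = a₄ := by rw [hφ, mul_assoc, h₄a.eq]; group
  refine ⟨?_, ?_, ?_⟩
  · simpa [hφp] using pow_apply_eq_mul_pow φ e₃ e₄ p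
  · simpa [hφp, mul_assoc] using pow_apply_eq_mul_pow_mul_pow_choose φ e₂ e₃ e₄ h₃₄ p
  · simpa [hφp, mul_assoc] using
      pow_apply_eq_mul_pow_mul_pow_choose_mul_pow_choose φ e₁ e₂ e₃ e₄ h₂₃ h₃₄ p

section Commutators

variable {H : Type*} [Group H]

lemma commute_mul_inv_iff (t u b : H) :
    Commute t (u * b⁻¹) ↔ t⁻¹ * u⁻¹ * t * u = t⁻¹ * b⁻¹ * t * b := by
  have k₁ : t⁻¹ * u⁻¹ * (t * (u * b⁻¹)) * b = t⁻¹ * u⁻¹ * t * u := by group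
  have k₂ : t⁻¹ * u⁻¹ * (u * b⁻¹ * t) * b = t⁻¹ * b⁻¹ * t * b := by group
  rw [commute_iff_eq, ← k₁, ← k₂, mul_left_inj, mul_right_inj]

lemma commute_mul_inv_mul_inv_iff {t a b x : H} (hab : Commute a b) (htx : Commute t x) :
    Commute (t * a⁻¹) (b * x⁻¹) ↔ t⁻¹ * b⁻¹ * t * b = x⁻¹ * a⁻¹ * x * a := by
  have e₁ : t * a⁻¹ * (b * x⁻¹) = t * b * (a⁻¹ * x⁻¹) := by
    rw [mul_assoc, ← mul_assoc a⁻¹, hab.inv_left.eq]; group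
  have e₂ : b * x⁻¹ * (t * a⁻¹) = b * t * (x⁻¹ * a⁻¹) := by
    rw [mul_assoc, ← mul_assoc x⁻¹, ← htx.inv_right.eq]; group
  have k₁ : (b * t)⁻¹ * (t * b * (a⁻¹ * x⁻¹)) * (a⁻¹ * x⁻¹)⁻¹ = t⁻¹ * b⁻¹ * t * b := by group
  have k₂ : (b * t)⁻¹ * (b * t * (x⁻¹ * a⁻¹)) * (a⁻¹ * x⁻¹)⁻¹ = x⁻¹ * a⁻¹ * x * a := by group
  rw [commute_iff_eq, e₁, e₂, ← k₁, ← k₂, mul_left_inj, mul_right_inj]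

end Commutators

namespace Phi27

section Relators

variable {rels : Set (FreeGroup Gen)}

lemma mk_of (x : Gen) : PresentedGroup.mk rels (of x) = .of x := rfl

lemma commute_of_mem {x y : Gen} (h : c (of x) (of y) ∈ rels) :
    Commute (PresentedGroup.of x : PresentedGroup rels) (.of y) := by
  have h₁ := PresentedGroup.one_of_mem h
  simp only [c, _root_.map_mul, _root_.map_inv, mk_of] at h₁
  calc _ = .of y * .of x * ((PresentedGroup.of x)⁻¹ * (.of y)⁻¹ * .of x * .of y) := by group
    _ = _ := by rw [h₁, mul_one]

lemma commutator_of_mem {x y z : Gen} (h : c (of x) (of y) * (of z)⁻¹ ∈ rels) :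
    (PresentedGroup.of x : PresentedGroup rels)⁻¹ * (.of y)⁻¹ * .of x * .of y = .of z := by
  have h₁ := PresentedGroup.one_of_mem h
  simp only [c, _root_.map_mul, _root_.map_inv, mk_of] at h₁
  exact mul_inv_eq_one.1 h₁

lemma pow_eq_one_of_mem {x : Gen} {n : ℕ} (h : of x ^ n ∈ rels) :
    (PresentedGroup.of x : PresentedGroup rels) ^ n = 1 := by
  simpa only [_root_.map_pow, mk_of] using PresentedGroup.one_of_mem h

variable {E : Type*} [Group E] {π : E →* PresentedGroup rels} {f : Gen → E}

lemma commute_apply_of_mem (hπ : ∀ x y, Commute (π x) (π y) → Commute x y)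
    (hf : ∀ x, π (f x) = .of x) {x y : Gen} (h : c (of x) (of y) ∈ rels) :
    Commute (f x) (f y) :=
  hπ _ _ (by rw [hf, hf]; exact commute_of_mem h)

lemma lift_eq_one_of_commutator_mem (hπ : ∀ x y, Commute (π x) (π y) → Commute x y)
    (hf : ∀ x, π (f x) = .of x) {x y : Gen} (h : c (of x) (of y) ∈ rels) :
    FreeGroup.lift f (c (of x) (of y)) = 1 := by
  simp only [c, _root_.map_mul, _root_.map_inv, FreeGroup.lift_apply_of]
  rw [mul_assoc _ (f x), (commute_apply_of_mem hπ hf h).eq]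
  group

end Relators

section Lifting

variable {p : ℕ} {E : Type*} [Group E] {π : E →* PresentedGroup (rels p)} {f : Gen → E}

lemma commutator_apply_a1_b (hπ : ∀ x y, Commute (π x) (π y) → Commute x y)
    (hf : ∀ x, π (f x) = .of x) (h₄ : (f .a3)⁻¹ * (f .a)⁻¹ * f .a3 * f .a = f .a4) :
    (f .a1)⁻¹ * (f .b)⁻¹ * f .a1 * f .b = f .a4 := by
  have hG : Commute (PresentedGroup.of .a1 * (PresentedGroup.of .a)⁻¹ : PresentedGroup (rels p))
      (.of .b * (.of .a3)⁻¹) :=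
    (commute_mul_inv_mul_inv_iff (commute_of_mem (by simp [rels]))
      (commute_of_mem (by simp [rels]))).2
      ((commutator_of_mem (z := .a4) (by simp [rels])).trans
        (commutator_of_mem (by simp [rels])).symm)
  have hE := hπ (f .a1 * (f .a)⁻¹) (f .b * (f .a3)⁻¹)
    (by simpa only [_root_.map_mul, _root_.map_inv, hf] using hG)
  rw [commute_mul_inv_mul_inv_iff (commute_apply_of_mem hπ hf (by simp [rels]))
    (commute_apply_of_mem hπ hf (by simp [rels]))] at hE
  exact hE.trans h₄

lemma commutator_apply_a1_a2 (hπ : ∀ x y, Commute (π x) (π y) → Commute x y)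
    (hf : ∀ x, π (f x) = .of x) :
    (f .a1)⁻¹ * (f .a2)⁻¹ * f .a1 * f .a2 = (f .a1)⁻¹ * (f .b)⁻¹ * f .a1 * f .b := by
  have hG : Commute (PresentedGroup.of .a1 : PresentedGroup (rels p)) (.of .a2 * (.of .b)⁻¹) :=
    (commute_mul_inv_iff _ _ _).2
      ((commutator_of_mem (z := .a4) (by simp [rels])).trans
        (commutator_of_mem (by simp [rels])).symm)
  exact (commute_mul_inv_iff _ _ _).1
    (hπ _ _ (by simpa only [_root_.map_mul, _root_.map_inv, hf] using hG))

lemma lift_eq_one_of_mem_rels (hπ : ∀ x y, Commute (π x) (π y) → Commute x y)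
    (hf : ∀ x, π (f x) = .of x) (ha : f .a ^ p = 1) (hb : f .b ^ p = 1)
    (h₂ : (f .a1)⁻¹ * (f .a)⁻¹ * f .a1 * f .a = f .a2)
    (h₃ : (f .a2)⁻¹ * (f .a)⁻¹ * f .a2 * f .a = f .a3)
    (h₄ : (f .a3)⁻¹ * (f .a)⁻¹ * f .a3 * f .a = f .a4)
    (h₁ : f .a1 ^ p * f .a2 ^ p.choose 2 * f .a3 ^ p.choose 3 * f .a4 ^ p.choose 4 = 1) :
    ∀ r ∈ rels p, FreeGroup.lift f r = 1 := by
  have h₁b := commutator_apply_a1_b hπ hf h₄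
  have h₁₂ := (commutator_apply_a1_a2 hπ hf).trans h₁b
  obtain ⟨h₄p, h₃p, h₂p⟩ := pow_relations_of_commutator_chain ha h₂ h₃ h₄
    (commute_apply_of_mem hπ hf (by simp [rels]))
    (commute_apply_of_mem hπ hf (by simp [rels])).symm
    (commute_apply_of_mem hπ hf (by simp [rels]))
  intro r hr
  have hr' := hr
  simp only [rels, Set.mem_insert_iff, Set.mem_singleton_iff] at hr'
  rcases hr' with rfl | rfl | rfl | rfl | rfl | rfl | rfl | rfl | rfl | rfl | rfl | rfl | rfl |
    rfl | rfl | rfl | rfl | rfl | rfl | rfl | rfl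
  all_goals first
    | simp only [c, _root_.map_mul, _root_.map_inv, _root_.map_pow, FreeGroup.lift_apply_of,
        mul_inv_eq_one]
      assumption
    | exact lift_eq_one_of_commutator_mem hπ hf hr

theorem exists_section (hsurj : Function.Surjective π)
    (hπ : ∀ x y, Commute (π x) (π y) → Commute x y)
    (hroot : ∀ w, π w = 1 → ∃ z, π z = 1 ∧ z ^ p = w) :
    ∃ s : PresentedGroup (rels p) →* E, π.comp s = .id _ := by
  obtain ⟨a, ha, hap⟩ :=
    exists_map_eq_pow_eq_one hsurj hπ hroot (pow_eq_one_of_mem (x := .a) (by simp [rels]))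
  obtain ⟨b, hb, hbp⟩ :=
    exists_map_eq_pow_eq_one hsurj hπ hroot (pow_eq_one_of_mem (x := .b) (by simp [rels]))
  obtain ⟨t, ht⟩ := hsurj (.of .a1)
  set a₂ := t⁻¹ * a⁻¹ * t * a
  set a₃ := a₂⁻¹ * a⁻¹ * a₂ * a
  set a₄ := a₃⁻¹ * a⁻¹ * a₃ * a
  have ha₂ : π a₂ = .of .a2 := by
    simp only [a₂, _root_.map_mul, _root_.map_inv, ha, ht]
    exact commutator_of_mem (by simp [rels])
  have ha₃ : π a₃ = .of .a3 := by
    simp only [a₃, _root_.map_mul, _root_.map_inv, ha, ha₂]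
    exact commutator_of_mem (by simp [rels])
  have ha₄ : π a₄ = .of .a4 := by
    simp only [a₄, _root_.map_mul, _root_.map_inv, ha, ha₃]
    exact commutator_of_mem (by simp [rels])
  have hrel : (PresentedGroup.of .a1 : PresentedGroup (rels p)) ^ p * .of .a2 ^ p.choose 2
      * .of .a3 ^ p.choose 3 * .of .a4 ^ p.choose 4 = 1 := by
    simpa only [_root_.map_mul, _root_.map_pow, mk_of] using PresentedGroup.one_of_mem
      (x := of Gen.a1 ^ p * of Gen.a2 ^ p.choose 2 * of Gen.a3 ^ p.choose 3 *
        of Gen.a4 ^ p.choose 4) (by simp [rels])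
  obtain ⟨a₁, ha₁, ha₁p⟩ := exists_map_eq_pow_mul_eq_one hπ hroot (x := t)
    (w := a₂ ^ p.choose 2 * a₃ ^ p.choose 3 * a₄ ^ p.choose 4)
    (by simpa only [_root_.map_mul, _root_.map_pow, ht, ha₂, ha₃, ha₄, mul_assoc] using hrel)
  let f : Gen → E
    | .a => a | .a1 => a₁ | .a2 => a₂ | .a3 => a₃ | .a4 => a₄ | .b => b
  have hf : ∀ x, π (f x) = .of x := by
    rintro (_ | _ | _ | _ | _ | _)
    exacts [ha, ha₁.trans ht, ha₂, ha₃, ha₄, hb]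
  refine PresentedGroup.exists_section_of_lift π hf
    (lift_eq_one_of_mem_rels hπ hf hap hbp ?_ rfl rfl (by simpa only [mul_assoc] using ha₁p))
  exact commutator_eq_of_map_eq hπ ha₁

end Lifting

end Phi27

theorem bogomolov_trivial_Phi27_general (p : ℕ) (hp : p.Prime) :
    BogomolovMultiplierIsTrivial (PresentedGroup (rels p)) :=
  bogomolovMultiplierIsTrivial_of_exists_section hp.ne_zero fun _ _ _ =>
    Phi27.exists_section

theorem bogomolov_trivial_Phi27 (p : ℕ) (hp : p.Prime) (h3 : 3 < p)
    (hcard : Nat.card (PresentedGroup (rels p)) = p ^ 6) :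
    BogomolovMultiplierIsTrivial (PresentedGroup (rels p)) :=
  bogomolov_trivial_Phi27_general p hp

end Stmt6
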